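/- Duffin's reflection principle for biharmonic functions: let ψ : {y ∈ ℝⁿ : y₁ ≤ 0} → ℝ be smooth with Δ²ψ = 0 on {y₁ < 0} and ψ = ∂₁ψ = 0 on {y₁ = 0}. Define ψ*(y) = ψ(y) if y₁ ≤ 0 and ψ*(y) = −ψ(−y₁, ȳ) − 2y₁ ∂₁ψ(−y₁, ȳ) − y₁² Δψ(−y₁, ȳ) if y₁ > 0. Then ψ* is C⁴ on ℝⁿ and Δ²ψ* = 0 on all of ℝⁿ. -/

import Mathlib

open MeasureTheory Filter

noncomputable def lap {n : ℕ} (f : EuclideanSpace ℝ (Fin n) → ℝ) (x : EuclideanSpace ℝ (Fin n)) : ℝ :=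
  ∑ i : Fin n, fderiv ℝ (fun y => fderiv ℝ f y (EuclideanSpace.single i 1)) x (EuclideanSpace.single i 1)

noncomputable def biharm {n : ℕ} (f : EuclideanSpace ℝ (Fin n) → ℝ) : EuclideanSpace ℝ (Fin n) → ℝ :=
  lap (lap f)

noncomputable def reflect {n : ℕ} [NeZero n] (x : EuclideanSpace ℝ (Fin n)) :
    EuclideanSpace ℝ (Fin n) :=
  WithLp.toLp 2 (fun i => if i = 0 then -x 0 else x i)

namespace Duffin
open Topology
set_option linter.unusedSectionVars false

variable {n : ℕ} [NeZero n]

local notation "E" => EuclideanSpace ℝ (Fin n)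

/-- directional derivative operator -/
noncomputable def De (v : EuclideanSpace ℝ (Fin n)) (f : EuclideanSpace ℝ (Fin n) → ℝ) :
    EuclideanSpace ℝ (Fin n) → ℝ := fun x => fderiv ℝ f x v

noncomputable def ee : EuclideanSpace ℝ (Fin n) := EuclideanSpace.single 0 1

lemma ee_zero : (ee (n := n)) 0 = 1 := by simp [ee, EuclideanSpace.single_apply]

lemma single_coord_ne {i : Fin n} (hi : i ≠ 0) : (EuclideanSpace.single i (1:ℝ)) 0 = 0 := by
  simp [EuclideanSpace.single_apply, hi.symm]

noncomputable def Rl : EuclideanSpace ℝ (Fin n) →ₗ[ℝ] EuclideanSpace ℝ (Fin n) where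
  toFun := reflect
  map_add' x y := by
    ext i
    show reflect (x + y) i = reflect x i + reflect y i
    simp only [reflect, PiLp.add_apply, PiLp.toLp_apply]
    split <;> ring
  map_smul' c x := by
    ext i
    show reflect (c • x) i = c • reflect x i
    simp only [reflect, PiLp.smul_apply, smul_eq_mul, PiLp.toLp_apply]
    split <;> ring

noncomputable def Rc : EuclideanSpace ℝ (Fin n) →L[ℝ] EuclideanSpace ℝ (Fin n) :=
  Rl.toContinuousLinearMap

lemma Rc_apply (x : EuclideanSpace ℝ (Fin n)) : Rc x = reflect x := rfl

lemma Rc_coord (x : EuclideanSpace ℝ (Fin n)) : (Rc x) 0 = -(x 0) := by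
  show reflect x 0 = -(x 0); simp [reflect]

lemma Rc_fix {x : EuclideanSpace ℝ (Fin n)} (hx : x 0 = 0) : Rc x = x := by
  ext i
  show reflect x i = x i
  simp only [reflect, PiLp.toLp_apply]
  split
  · rename_i h; rw [h, hx]; ring
  · rfl

lemma Rc_ee : Rc (ee (n := n)) = -ee := by
  ext i
  show reflect ee i = (-ee) i
  simp only [reflect, PiLp.neg_apply, ee, EuclideanSpace.single_apply, PiLp.toLp_apply]
  split
  · rename_i h; simp [h]
  · rename_i h; simp [Ne.symm h]

lemma Rc_single {i : Fin n} (hi : i ≠ 0) :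
    Rc (EuclideanSpace.single i (1:ℝ)) = EuclideanSpace.single i (1:ℝ) := by
  ext j
  show reflect _ j = _
  simp only [reflect, EuclideanSpace.single_apply, PiLp.toLp_apply]
  split
  · rename_i h; simp [h, Ne.symm hi]
  · rfl

lemma Rc_Rc (x : EuclideanSpace ℝ (Fin n)) : Rc (Rc x) = x := by
  ext i
  show reflect (reflect x) i = x i
  simp only [reflect, PiLp.toLp_apply]
  split
  · rename_i h; subst h; simp
  · rfl

/-! ### smoothness -/

abbrev SM (f : EuclideanSpace ℝ (Fin n) → ℝ) : Prop := ContDiff ℝ (⊤ : ℕ∞) f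

lemma one_le_inf : (1 : WithTop ℕ∞) ≤ ((⊤ : ℕ∞) : WithTop ℕ∞) := by
  exact_mod_cast le_top

lemma SM.diff {f : EuclideanSpace ℝ (Fin n) → ℝ} (hf : SM f) : Differentiable ℝ f :=
  hf.differentiable (by simp)

lemma SM.fderiv_sm {f : EuclideanSpace ℝ (Fin n) → ℝ} (hf : SM f) :
    ContDiff ℝ (⊤ : ℕ∞) (fderiv ℝ f) :=
  (contDiff_infty_iff_fderiv.1 hf).2

lemma SM.de {f : EuclideanSpace ℝ (Fin n) → ℝ} (hf : SM f) (v : EuclideanSpace ℝ (Fin n)) :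
    SM (De v f) :=
  (ContinuousLinearMap.apply ℝ ℝ v).contDiff.comp hf.fderiv_sm

lemma lap_eq (f : EuclideanSpace ℝ (Fin n) → ℝ) :
    lap f = fun x => ∑ i : Fin n,
      De (EuclideanSpace.single i 1) (De (EuclideanSpace.single i 1) f) x := rfl

lemma SM.lap {f : EuclideanSpace ℝ (Fin n) → ℝ} (hf : SM f) : SM (_root_.lap f) := by
  rw [lap_eq]
  exact ContDiff.sum fun i _ => (hf.de _).de _

lemma SM_coord : SM (fun y : EuclideanSpace ℝ (Fin n) => y 0) :=
  (EuclideanSpace.proj (𝕜 := ℝ) (0 : Fin n)).contDiff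

lemma SM.compRc {f : EuclideanSpace ℝ (Fin n) → ℝ} (hf : SM f) :
    SM (fun y => f (Rc y)) := hf.comp Rc.contDiff

/-! ### basic De lemmas -/

lemma De_apply (v : EuclideanSpace ℝ (Fin n)) (f : EuclideanSpace ℝ (Fin n) → ℝ) (x) :
    De v f x = fderiv ℝ f x v := rfl

lemma De_neg_fun (v : EuclideanSpace ℝ (Fin n)) (g : EuclideanSpace ℝ (Fin n) → ℝ) :
    De v (fun x => -g x) = fun x => -(De v g x) := by
  funext x; simp [De, fderiv_neg]

lemma De_neg_dir (v : EuclideanSpace ℝ (Fin n)) (g : EuclideanSpace ℝ (Fin n) → ℝ) :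
    De (-v) g = fun x => -(De v g x) := by
  funext x; simp [De]

lemma hasFDerivAt_coord (y : EuclideanSpace ℝ (Fin n)) :
    HasFDerivAt (fun y : EuclideanSpace ℝ (Fin n) => y 0)
      (EuclideanSpace.proj (𝕜 := ℝ) (0 : Fin n)) y :=
  (EuclideanSpace.proj (𝕜 := ℝ) (0 : Fin n)).hasFDerivAt

lemma proj_ee : (EuclideanSpace.proj (𝕜 := ℝ) (0 : Fin n)) (ee (n := n)) = 1 := by
  simpa using ee_zero (n := n)

lemma hasFDerivAt_compRc {f : EuclideanSpace ℝ (Fin n) → ℝ} (hf : SM f) (y) :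
    HasFDerivAt (fun y => f (Rc y)) ((fderiv ℝ f (Rc y)).comp Rc) y :=
  (hf.diff (Rc y)).hasFDerivAt.comp y Rc.hasFDerivAt

lemma De_comp_Rc {f : EuclideanSpace ℝ (Fin n) → ℝ} (hf : SM f)
    (v : EuclideanSpace ℝ (Fin n)) :
    De v (fun y => f (Rc y)) = fun y => De (Rc v) f (Rc y) := by
  funext y
  simp [De, (hasFDerivAt_compRc hf y).fderiv]

lemma De_de_comp_Rc {f : EuclideanSpace ℝ (Fin n) → ℝ} (hf : SM f)
    (v : EuclideanSpace ℝ (Fin n)) :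
    De v (De v (fun y => f (Rc y))) = fun y => De (Rc v) (De (Rc v) f) (Rc y) := by
  rw [De_comp_Rc hf v, De_comp_Rc (hf.de _) v]

lemma De_sub {f g : EuclideanSpace ℝ (Fin n) → ℝ} (hf : SM f) (hg : SM g) (v) :
    De v (fun y => f y - g y) = fun y => De v f y - De v g y := by
  funext y; simp [De, fderiv_fun_sub (hf.diff y) (hg.diff y)]

/-! ### Clairaut -/

lemma De_eq_snd {f : EuclideanSpace ℝ (Fin n) → ℝ} (hf : SM f) (a b x) :
    De a (De b f) x = fderiv ℝ (fderiv ℝ f) x a b := by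
  have h := fderiv_clm_apply (c := fderiv ℝ f) (u := fun _ => b) (x := x)
    (hf.fderiv_sm.differentiable (by simp) x) (differentiableAt_const b)
  show fderiv ℝ (fun y => fderiv ℝ f y b) x a = _
  rw [h]
  simp [fderiv_const]

lemma Dcomm {f : EuclideanSpace ℝ (Fin n) → ℝ} (hf : SM f) (a b) :
    De a (De b f) = De b (De a f) := by
  funext x
  rw [De_eq_snd hf, De_eq_snd hf]
  exact hf.contDiffAt.isSymmSndFDerivAt (by rw [minSmoothness_of_isRCLikeNormedField]; exact WithTop.coe_le_coe.mpr le_top) a b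

/-! ### tangential vanishing -/

lemma De_tangent {f : EuclideanSpace ℝ (Fin n) → ℝ} (hf : SM f)
    {v : EuclideanSpace ℝ (Fin n)} (hv : v 0 = 0)
    (h0 : ∀ x, x 0 = 0 → f x = 0) : ∀ x, x 0 = 0 → De v f x = 0 := by
  intro x hx
  have hc : HasDerivAt (fun t : ℝ => x + t • v) v 0 := by
    simpa using ((hasDerivAt_id (0:ℝ)).smul_const v).const_add x
  have hF : HasFDerivAt f (fderiv ℝ f x) (x + (0:ℝ) • v) := by
    simpa using ((hf.diff x).hasFDerivAt)
  have hcomp : HasDerivAt (fun t : ℝ => f (x + t • v)) (fderiv ℝ f x v) 0 :=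
    hF.comp_hasDerivAt 0 hc
  have hzero : (fun t : ℝ => f (x + t • v)) = fun _ => 0 := by
    funext t
    apply h0
    show (x + t • v) 0 = 0
    rw [PiLp.add_apply, PiLp.smul_apply, hx, hv, smul_eq_mul]
    ring
  rw [hzero] at hcomp
  have := hcomp.unique (hasDerivAt_const 0 0)
  simpa [De] using this


/-! ### master derivative lemma for the standard shape -/

lemma De_shape (a₁ a₂ a₃ a₄ a₅ a₆ : ℝ) (p1 p2 q1 q2 s w : EuclideanSpace ℝ (Fin n) → ℝ)
    (hp1 : SM p1) (hp2 : SM p2) (hq1 : SM q1) (hq2 : SM q2) (hs : SM s) (hw : SM w) :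
    De ee (fun y => a₁ * p1 (Rc y) + a₂ * p2 (Rc y) + a₃ * (y 0) * q1 (Rc y)
        + a₄ * (y 0) * q2 (Rc y) + a₅ * (y 0) * (y 0) * s (Rc y) + a₆ * w y)
      = fun y => -(a₁ * De ee p1 (Rc y)) - a₂ * De ee p2 (Rc y)
        + a₃ * q1 (Rc y) + a₄ * q2 (Rc y)
        - a₃ * (y 0) * De ee q1 (Rc y) - a₄ * (y 0) * De ee q2 (Rc y)
        + 2 * a₅ * (y 0) * s (Rc y) - a₅ * (y 0) * (y 0) * De ee s (Rc y)
        + a₆ * De ee w y := by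
  funext y
  have hL := hasFDerivAt_coord (n := n) y
  have h1 := (hasFDerivAt_compRc hp1 y).const_mul a₁
  have h2 := (hasFDerivAt_compRc hp2 y).const_mul a₂
  have h3 := ((hL.const_mul a₃).mul (hasFDerivAt_compRc hq1 y))
  have h4 := ((hL.const_mul a₄).mul (hasFDerivAt_compRc hq2 y))
  have h5 := (((hL.const_mul a₅).mul hL).mul (hasFDerivAt_compRc hs y))
  have h6 := ((hw.diff y).hasFDerivAt).const_mul a₆
  have H := ((((h1.add h2).add h3).add h4).add h5).add h6
  have hfd := H.fderiv
  show fderiv ℝ _ y (ee) = _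
  erw [hfd]
  simp only [ContinuousLinearMap.add_apply, ContinuousLinearMap.smul_apply,
    ContinuousLinearMap.comp_apply, Rc_ee, map_neg, proj_ee, smul_eq_mul, De_apply, Pi.mul_apply]
  ring

/-! ### more De algebra -/

lemma De_add {f g : EuclideanSpace ℝ (Fin n) → ℝ} (hf : SM f) (hg : SM g) (v) :
    De v (fun y => f y + g y) = fun y => De v f y + De v g y := by
  funext y; simp [De, fderiv_fun_add (hf.diff y) (hg.diff y)]

lemma De_const_mul {g : EuclideanSpace ℝ (Fin n) → ℝ} (hg : SM g) (c : ℝ) (v) :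
    De v (fun y => c * g y) = fun y => c * De v g y := by
  funext y; simp [De, fderiv_const_mul (hg.diff y) c]

lemma De_sum (v : EuclideanSpace ℝ (Fin n)) (F : Fin n → (EuclideanSpace ℝ (Fin n) → ℝ))
    (hF : ∀ i, SM (F i)) :
    De v (fun x => ∑ i, F i x) = fun x => ∑ i, De v (F i) x := by
  funext x
  simp [De, fderiv_fun_sum (fun i _ => ((hF i).diff x))]

lemma De_coord_mul {g : EuclideanSpace ℝ (Fin n) → ℝ} (hg : SM g) (v) :
    De v (fun y => y 0 * g y) = fun y => v 0 * g y + y 0 * De v g y := by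
  funext y
  have H := (hasFDerivAt_coord (n := n) y).mul (hg.diff y).hasFDerivAt
  show fderiv ℝ _ y v = _
  erw [H.fderiv]
  simp [De_apply, PiLp.proj_apply]
  ring

lemma De_negneg (v : EuclideanSpace ℝ (Fin n)) (f : EuclideanSpace ℝ (Fin n) → ℝ) :
    De (-v) (De (-v) f) = De v (De v f) := by
  rw [show De (-v) f = fun x => -(De v f x) from De_neg_dir v f,
    De_neg_dir v _, De_neg_fun]
  funext x; simp

lemma De_ee_compRc {f : EuclideanSpace ℝ (Fin n) → ℝ} (hf : SM f) :
    De ee (fun y => f (Rc y)) = fun y => -(De ee f (Rc y)) := by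
  funext y
  rw [congrFun (De_comp_Rc hf ee) y, Rc_ee]
  exact congrFun (De_neg_dir ee f) (Rc y)

/-! ### lap algebra -/

lemma lap_add {f g : EuclideanSpace ℝ (Fin n) → ℝ} (hf : SM f) (hg : SM g) :
    _root_.lap (fun y => f y + g y) = fun y => _root_.lap f y + _root_.lap g y := by
  funext x
  rw [lap_eq, lap_eq f, lap_eq g]
  rw [show (∑ i : Fin n, De (EuclideanSpace.single i 1) (De (EuclideanSpace.single i 1) f) x)
      + (∑ i : Fin n, De (EuclideanSpace.single i 1) (De (EuclideanSpace.single i 1) g) x)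
    = ∑ i : Fin n, (De (EuclideanSpace.single i 1) (De (EuclideanSpace.single i 1) f) x
      + De (EuclideanSpace.single i 1) (De (EuclideanSpace.single i 1) g) x) from
    (Finset.sum_add_distrib).symm]
  apply Finset.sum_congr rfl
  intro i _
  rw [De_add hf hg, De_add (hf.de _) (hg.de _)]

lemma lap_const_mul {g : EuclideanSpace ℝ (Fin n) → ℝ} (hg : SM g) (c : ℝ) :
    _root_.lap (fun y => c * g y) = fun y => c * _root_.lap g y := by
  funext x
  rw [lap_eq, lap_eq g]
  rw [show (c * ∑ i : Fin n, De (EuclideanSpace.single i 1) (De (EuclideanSpace.single i 1) g) x)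
    = ∑ i : Fin n, c * De (EuclideanSpace.single i 1) (De (EuclideanSpace.single i 1) g) x from
    Finset.mul_sum _ _ _]
  apply Finset.sum_congr rfl
  intro i _
  rw [De_const_mul hg c, De_const_mul (hg.de _) c]

lemma lap_comp_Rc {f : EuclideanSpace ℝ (Fin n) → ℝ} (hf : SM f) :
    _root_.lap (fun y => f (Rc y)) = fun y => _root_.lap f (Rc y) := by
  funext x
  rw [lap_eq, lap_eq f]
  apply Finset.sum_congr rfl
  intro i _
  rw [De_de_comp_Rc hf]
  by_cases hi : i = 0
  · subst hi
    rw [show (EuclideanSpace.single (0 : Fin n) (1:ℝ)) = ee from rfl, Rc_ee, De_negneg]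
  · rw [Rc_single hi]

lemma lap_de {f : EuclideanSpace ℝ (Fin n) → ℝ} (hf : SM f) :
    _root_.lap (De ee f) = De ee (_root_.lap f) := by
  rw [lap_eq f, De_sum ee _ (fun i => (hf.de _).de _), lap_eq (De ee f)]
  funext x
  apply Finset.sum_congr rfl
  intro i _
  rw [Dcomm hf (EuclideanSpace.single i 1) ee, Dcomm (hf.de _) (EuclideanSpace.single i 1) ee]

lemma lap_coord_mul {g : EuclideanSpace ℝ (Fin n) → ℝ} (hg : SM g) :
    _root_.lap (fun y => y 0 * g y) = fun y => 2 * De ee g y + y 0 * _root_.lap g y := by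
  funext x
  rw [lap_eq, lap_eq g]
  beta_reduce
  have hterm : ∀ i : Fin n,
      De (EuclideanSpace.single i 1) (De (EuclideanSpace.single i 1) (fun y => y 0 * g y)) x
      = 2 * (EuclideanSpace.single i (1:ℝ)) 0 * De (EuclideanSpace.single i 1) g x
        + x 0 * De (EuclideanSpace.single i 1) (De (EuclideanSpace.single i 1) g) x := by
    intro i
    rw [De_coord_mul hg]
    rw [De_add (by exact contDiff_const.mul hg : SM (fun y => (EuclideanSpace.single i (1:ℝ)) 0 * g y))
        (by exact SM_coord.mul (hg.de _) : SM (fun y => y 0 * De (EuclideanSpace.single i 1) g y)) ]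
    rw [De_const_mul hg, De_coord_mul (hg.de _)]
    ring
  rw [Finset.sum_congr rfl (fun i _ => hterm i)]
  rw [Finset.sum_add_distrib]
  congr 1
  · rw [Finset.sum_eq_single (0 : Fin n)]
    · rw [show (EuclideanSpace.single (0 : Fin n) (1:ℝ)) = ee from rfl, ee_zero]; ring
    · intro i _ hi
      rw [single_coord_ne hi]; ring
    · intro h; exact absurd (Finset.mem_univ _) h
  · rw [← Finset.mul_sum]

lemma lap_coord_sq {g : EuclideanSpace ℝ (Fin n) → ℝ} (hg : SM g) :
    _root_.lap (fun y => y 0 * (y 0 * g y)) =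
      fun y => 2 * g y + 4 * y 0 * De ee g y + y 0 * (y 0 * _root_.lap g y) := by
  rw [lap_coord_mul (SM_coord.mul hg), De_coord_mul hg, lap_coord_mul hg]
  funext y
  rw [ee_zero]
  ring

/-! ### master lap lemma for the standard shape -/

lemma lap_shape (a₁ a₂ a₃ a₄ a₅ a₆ : ℝ) (p1 p2 q1 q2 s w : EuclideanSpace ℝ (Fin n) → ℝ)
    (hp1 : SM p1) (hp2 : SM p2) (hq1 : SM q1) (hq2 : SM q2) (hs : SM s) (hw : SM w) :
    _root_.lap (fun y => a₁ * p1 (Rc y) + a₂ * p2 (Rc y) + a₃ * (y 0) * q1 (Rc y)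
        + a₄ * (y 0) * q2 (Rc y) + a₅ * (y 0) * (y 0) * s (Rc y) + a₆ * w y)
    = fun y => a₁ * _root_.lap p1 (Rc y) + a₂ * _root_.lap p2 (Rc y)
        - 2 * a₃ * De ee q1 (Rc y) - 2 * a₄ * De ee q2 (Rc y)
        + a₃ * (y 0) * _root_.lap q1 (Rc y) + a₄ * (y 0) * _root_.lap q2 (Rc y)
        + 2 * a₅ * s (Rc y) - 4 * a₅ * (y 0) * De ee s (Rc y)
        + a₅ * (y 0) * (y 0) * _root_.lap s (Rc y)
        + a₆ * _root_.lap w y := by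
  have sm1 : SM (fun y => p1 (Rc y)) := hp1.compRc
  have sm2 : SM (fun y => p2 (Rc y)) := hp2.compRc
  have smq1 : SM (fun y => y 0 * q1 (Rc y)) := SM_coord.mul hq1.compRc
  have smq2 : SM (fun y => y 0 * q2 (Rc y)) := SM_coord.mul hq2.compRc
  have smsq : SM (fun y => y 0 * (y 0 * s (Rc y))) := SM_coord.mul (SM_coord.mul hs.compRc)
  have t6 : SM (fun y => a₆ * w y) := contDiff_const.mul hw
  have t5 : SM (fun y => a₅ * (y 0 * (y 0 * s (Rc y))) + a₆ * w y) :=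
    (contDiff_const.mul smsq).add t6
  have t4 : SM (fun y => a₄ * (y 0 * q2 (Rc y)) + (a₅ * (y 0 * (y 0 * s (Rc y))) + a₆ * w y)) :=
    (contDiff_const.mul smq2).add t5
  have t3 : SM (fun y => a₃ * (y 0 * q1 (Rc y)) + (a₄ * (y 0 * q2 (Rc y))
      + (a₅ * (y 0 * (y 0 * s (Rc y))) + a₆ * w y))) :=
    (contDiff_const.mul smq1).add t4
  have t2 : SM (fun y => a₂ * p2 (Rc y) + (a₃ * (y 0 * q1 (Rc y)) + (a₄ * (y 0 * q2 (Rc y))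
      + (a₅ * (y 0 * (y 0 * s (Rc y))) + a₆ * w y)))) :=
    (contDiff_const.mul sm2).add t3
  have e1 : (fun y : EuclideanSpace ℝ (Fin n) => a₁ * p1 (Rc y) + a₂ * p2 (Rc y)
        + a₃ * (y 0) * q1 (Rc y) + a₄ * (y 0) * q2 (Rc y)
        + a₅ * (y 0) * (y 0) * s (Rc y) + a₆ * w y)
      = fun y => a₁ * p1 (Rc y) + (a₂ * p2 (Rc y) + (a₃ * (y 0 * q1 (Rc y))
        + (a₄ * (y 0 * q2 (Rc y)) + (a₅ * (y 0 * (y 0 * s (Rc y))) + a₆ * w y)))) := by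
    funext y; ring
  rw [e1]
  rw [lap_add (contDiff_const.mul sm1) t2, lap_const_mul sm1 a₁, lap_comp_Rc hp1]
  rw [lap_add (contDiff_const.mul sm2) t3, lap_const_mul sm2 a₂, lap_comp_Rc hp2]
  rw [lap_add (contDiff_const.mul smq1) t4, lap_const_mul smq1 a₃,
    lap_coord_mul hq1.compRc, De_ee_compRc hq1, lap_comp_Rc hq1]
  rw [lap_add (contDiff_const.mul smq2) t5, lap_const_mul smq2 a₄,
    lap_coord_mul hq2.compRc, De_ee_compRc hq2, lap_comp_Rc hq2]
  rw [lap_add (contDiff_const.mul smsq) t6, lap_const_mul smsq a₅,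
    lap_coord_sq hs.compRc, De_ee_compRc hs, lap_comp_Rc hs]
  rw [lap_const_mul hw a₆]
  funext y
  ring

/-! ### boundary facts -/

lemma tang2 {f : EuclideanSpace ℝ (Fin n) → ℝ} (hf : SM f)
    (h0 : ∀ x, x 0 = 0 → f x = 0) {i : Fin n} (hi : i ≠ 0) :
    ∀ x, x 0 = 0 →
      De (EuclideanSpace.single i 1) (De (EuclideanSpace.single i 1) f) x = 0 :=
  De_tangent (hf.de _) (single_coord_ne hi) (De_tangent hf (single_coord_ne hi) h0)

lemma Dcomm3 {f : EuclideanSpace ℝ (Fin n) → ℝ} (hf : SM f) (a b) :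
    De a (De b (De b f)) = De b (De b (De a f)) := by
  rw [Dcomm (hf.de b) a b, Dcomm hf a b]

lemma Dcomm4 {f : EuclideanSpace ℝ (Fin n) → ℝ} (hf : SM f) (a b) :
    De a (De a (De b (De b f))) = De b (De b (De a (De a f))) := by
  rw [Dcomm3 hf a b, Dcomm3 (hf.de a) a b]

/-- on the hyperplane, `lap f = ∂₁² f` provided `f` vanishes on the hyperplane -/
lemma lap_on_S {f : EuclideanSpace ℝ (Fin n) → ℝ} (hf : SM f)
    (h0 : ∀ x, x 0 = 0 → f x = 0) :
    ∀ x, x 0 = 0 → _root_.lap f x = De ee (De ee f) x := by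
  intro x hx
  rw [lap_eq]
  beta_reduce
  rw [Finset.sum_eq_single (0 : Fin n)]
  · rw [show (EuclideanSpace.single (0 : Fin n) (1:ℝ)) = ee from rfl]
  · intro i _ hi
    exact tang2 hf h0 hi x hx
  · intro h; exact absurd (Finset.mem_univ _) h

/-- on the hyperplane, `∂₁ lap f = ∂₁³ f` provided `∂₁ f` vanishes on the hyperplane -/
lemma de_lap_on_S {f : EuclideanSpace ℝ (Fin n) → ℝ} (hf : SM f)
    (h1 : ∀ x, x 0 = 0 → De ee f x = 0) :
    ∀ x, x 0 = 0 → De ee (_root_.lap f) x = De ee (De ee (De ee f)) x := by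
  intro x hx
  rw [lap_eq, De_sum ee _ (fun i => (hf.de _).de _)]
  beta_reduce
  rw [Finset.sum_eq_single (0 : Fin n)]
  · rw [show (EuclideanSpace.single (0 : Fin n) (1:ℝ)) = ee from rfl, Dcomm3 hf ee ee]
  · intro i _ hi
    rw [Dcomm3 hf ee (EuclideanSpace.single i 1)]
    exact tang2 (hf.de ee) h1 hi x hx
  · intro h; exact absurd (Finset.mem_univ _) h

/-- on the hyperplane, `∂₁⁴ f = 2 ∂₁² lap f` given the boundary conditions and `Δ²f = 0` there -/
lemma p4_eq_2w2 {f : EuclideanSpace ℝ (Fin n) → ℝ} (hf : SM f)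
    (h0 : ∀ x, x 0 = 0 → f x = 0) (h1 : ∀ x, x 0 = 0 → De ee f x = 0)
    (hB : ∀ x, x 0 = 0 → biharm f x = 0) :
    ∀ x, x 0 = 0 → De ee (De ee (De ee (De ee f))) x
      = 2 * De ee (De ee (_root_.lap f)) x := by
  intro x hx
  -- expand w2 = ∂₁² lap f pointwise
  have hw2 : De ee (De ee (_root_.lap f)) x
      = ∑ j : Fin n, De ee (De ee (De (EuclideanSpace.single j 1)
          (De (EuclideanSpace.single j 1) f))) x := by
    rw [lap_eq, De_sum ee _ (fun j => (hf.de _).de _),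
      De_sum ee _ (fun j => ((hf.de _).de _).de _)]
  have hsplit : ∑ j : Fin n, De ee (De ee (De (EuclideanSpace.single j 1)
        (De (EuclideanSpace.single j 1) f))) x
      = De ee (De ee (De ee (De ee f))) x
        + ∑ j ∈ Finset.univ.erase (0 : Fin n), De ee (De ee (De (EuclideanSpace.single j 1)
            (De (EuclideanSpace.single j 1) f))) x := by
    rw [← Finset.add_sum_erase _ _ (Finset.mem_univ (0 : Fin n))]
    rw [show (EuclideanSpace.single (0 : Fin n) (1:ℝ)) = ee from rfl]
  -- expand biharm f pointwise
  have hbi : biharm f x = De ee (De ee (_root_.lap f)) x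
      + ∑ i ∈ Finset.univ.erase (0 : Fin n), De (EuclideanSpace.single i 1)
          (De (EuclideanSpace.single i 1) (_root_.lap f)) x := by
    show _root_.lap (_root_.lap f) x = _
    rw [lap_eq (_root_.lap f)]
    beta_reduce
    rw [← Finset.add_sum_erase _ _ (Finset.mem_univ (0 : Fin n))]
    rw [show (EuclideanSpace.single (0 : Fin n) (1:ℝ)) = ee from rfl]
  -- each `i ≠ 0` term of biharm equals the corresponding term of w2, on S
  have hterm : ∀ i : Fin n, i ≠ 0 →
      De (EuclideanSpace.single i 1) (De (EuclideanSpace.single i 1) (_root_.lap f)) x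
      = De ee (De ee (De (EuclideanSpace.single i 1)
          (De (EuclideanSpace.single i 1) f))) x := by
    intro i hi
    have hexp : De (EuclideanSpace.single i 1) (De (EuclideanSpace.single i 1) (_root_.lap f))
        = fun z => ∑ j : Fin n, De (EuclideanSpace.single i 1) (De (EuclideanSpace.single i 1)
            (De (EuclideanSpace.single j 1) (De (EuclideanSpace.single j 1) f))) z := by
      rw [lap_eq, De_sum _ _ (fun j => (hf.de _).de _),
        De_sum _ _ (fun j => ((hf.de _).de _).de _)]
    rw [hexp]
    beta_reduce
    rw [Finset.sum_eq_single (0 : Fin n)]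
    · rw [show (EuclideanSpace.single (0 : Fin n) (1:ℝ)) = ee from rfl,
        Dcomm4 hf (EuclideanSpace.single i 1) ee]
    · intro j _ hj
      exact tang2 ((hf.de _).de _) (tang2 hf h0 hj) hi x hx
    · intro h; exact absurd (Finset.mem_univ _) h
  have hB0 := hB x hx
  rw [hbi, Finset.sum_congr rfl (fun i hi => hterm i (Finset.ne_of_mem_erase hi))] at hB0
  have hw2' := hw2
  rw [hsplit] at hw2'
  -- hB0 : 0 = w2 + Σ'  and hw2' : w2 = p4 + Σ'
  linarith [hB0, hw2']

/-! ### iterated normal derivatives -/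

noncomputable def Dn : ℕ → (EuclideanSpace ℝ (Fin n) → ℝ) → (EuclideanSpace ℝ (Fin n) → ℝ)
  | 0, f => f
  | k+1, f => De ee (Dn k f)

lemma SM.dn {f : EuclideanSpace ℝ (Fin n) → ℝ} (hf : SM f) (k : ℕ) : SM (Dn k f) := by
  induction k with
  | zero => exact hf
  | succ k ih => exact ih.de ee

lemma Dn_succ' (k : ℕ) (f : EuclideanSpace ℝ (Fin n) → ℝ) :
    Dn (k+1) f = Dn k (De ee f) := by
  induction k with
  | zero => rfl
  | succ k ih => show De ee (Dn (k+1) f) = De ee (Dn k (De ee f)); rw [ih]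

lemma Dn_comm_De {f : EuclideanSpace ℝ (Fin n) → ℝ} (hf : SM f) (v) (k : ℕ) :
    Dn k (De v f) = De v (Dn k f) := by
  induction k with
  | zero => rfl
  | succ k ih =>
    show De ee (Dn k (De v f)) = De v (De ee (Dn k f))
    rw [ih, Dcomm (hf.dn k) ee v]

/-- all iterated derivatives up to order `k` vanish on the hyperplane once the pure
normal derivatives do -/
lemma vanish_iterated :
    ∀ (k : ℕ) (f : EuclideanSpace ℝ (Fin n) → ℝ), SM f →
      (∀ j ≤ k, ∀ x, x 0 = 0 → Dn j f x = 0) →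
      ∀ x, x 0 = 0 → iteratedFDeriv ℝ k f x = 0 := by
  intro k
  induction k with
  | zero =>
    intro f hf h x hx
    ext m
    rw [iteratedFDeriv_zero_apply]
    simpa [Dn] using h 0 le_rfl x hx
  | succ k ih =>
    intro f hf h x hx
    ext m
    rw [iteratedFDeriv_succ_apply_right]
    set w : EuclideanSpace ℝ (Fin n) := m (Fin.last k) with hwdef
    set v : Fin k → EuclideanSpace ℝ (Fin n) := Fin.init m with hvdef
    set c : ℝ := w 0 with hc
    set w' : EuclideanSpace ℝ (Fin n) := w - c • ee with hw'def
    have key : ∀ u : EuclideanSpace ℝ (Fin n),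
        (iteratedFDeriv ℝ k (fun y => fderiv ℝ f y) x) v u
          = (iteratedFDeriv ℝ k (De u f) x) v := by
      intro u
      have hcomp := ContinuousLinearMap.iteratedFDeriv_comp_left
        (ContinuousLinearMap.apply ℝ ℝ u) (hf.fderiv_sm.contDiffAt (x := x)) (i := k) (by exact_mod_cast le_top)
      have hfun : (⇑(ContinuousLinearMap.apply ℝ ℝ u) ∘ (fun y => fderiv ℝ f y)) = De u f := rfl
      rw [hfun] at hcomp
      rw [hcomp]
      rfl
    have hw' : w' 0 = 0 := by
      rw [hw'def, PiLp.sub_apply, PiLp.smul_apply, ee_zero, smul_eq_mul]; ring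
    have z1 : iteratedFDeriv ℝ k (De ee f) x = 0 := by
      apply ih (De ee f) (hf.de ee) _ x hx
      intro j hj x2 hx2
      rw [← Dn_succ']
      exact h (j+1) (Nat.succ_le_succ hj) x2 hx2
    have z2 : iteratedFDeriv ℝ k (De w' f) x = 0 := by
      apply ih _ (hf.de _) _ x hx
      intro j hj x2 hx2
      rw [Dn_comm_De hf _ j]
      exact De_tangent (hf.dn j) hw'
        (fun z hz => h j (le_trans hj (Nat.le_succ k)) z hz) x2 hx2
    set A : EuclideanSpace ℝ (Fin n) →L[ℝ] ℝ :=
      (iteratedFDeriv ℝ k (fun y => fderiv ℝ f y) x) v with hA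
    have hrw : w = c • ee + w' := by rw [hw'def, add_comm, sub_add_cancel]
    have : A w = c * A ee + A w' := by rw [hrw, map_add, A.map_smul, smul_eq_mul]
    rw [show (iteratedFDeriv ℝ k (fun y => fderiv ℝ f y) x) v w = A w from rfl, this,
      show A ee = (iteratedFDeriv ℝ k (De ee f) x) v from key ee,
      show A w' = (iteratedFDeriv ℝ k (De w' f) x) v from key w', z1, z2]
    simp


/-! ### gluing lemma -/

lemma hcont_coord : Continuous (fun y : EuclideanSpace ℝ (Fin n) => y 0) :=
  (EuclideanSpace.proj (𝕜 := ℝ) (0 : Fin n)).continuous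

lemma hop_neg : IsOpen {y : EuclideanSpace ℝ (Fin n) | y 0 < 0} :=
  isOpen_lt hcont_coord continuous_const

lemma hop_pos : IsOpen {y : EuclideanSpace ℝ (Fin n) | 0 < y 0} :=
  isOpen_lt continuous_const hcont_coord

lemma glue : ∀ (m : ℕ) {F : Type} [NormedAddCommGroup F] [NormedSpace ℝ F]
    (f : EuclideanSpace ℝ (Fin n) → F), ContDiff ℝ (⊤ : ℕ∞) f →
    (∀ k : ℕ, k ≤ m → ∀ x : EuclideanSpace ℝ (Fin n), x 0 = 0 → iteratedFDeriv ℝ k f x = 0) →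
    ContDiff ℝ (m : ℕ) (fun x => if x 0 ≤ 0 then (0:F) else f x) := by
  intro m
  induction m with
  | zero =>
    intro F _ _ f hf hv
    rw [Nat.cast_zero, contDiff_zero, continuous_iff_continuousAt]
    intro x
    rcases lt_trichotomy (x 0) 0 with hx | hx | hx
    · have hev : (fun _ => (0:F)) =ᶠ[𝓝 x] (fun y : EuclideanSpace ℝ (Fin n) => if y 0 ≤ 0 then (0:F) else f y) := by
        filter_upwards [hop_neg.mem_nhds hx] with y hy
        rw [if_pos (le_of_lt hy)]
      exact continuousAt_const.congr hev
    · have hf0 : f x = 0 := by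
        have h00 := hv 0 (Nat.zero_le _) x hx
        have h01 : f x = (iteratedFDeriv ℝ 0 f x) (fun _ => 0) :=
          (iteratedFDeriv_zero_apply _).symm
        rw [h01, h00]; simp
      have hgx : (fun y : EuclideanSpace ℝ (Fin n) => if y 0 ≤ 0 then (0:F) else f y) x = 0 := by
        show (if x 0 ≤ 0 then (0:F) else f x) = 0
        exact if_pos (le_of_eq hx)
      unfold ContinuousAt
      rw [hgx]
      refine squeeze_zero_norm (a := fun y => ‖f y‖) (fun y => ?_) ?_
      · by_cases hy : y 0 ≤ 0
        · simp [hy]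
        · simp [hy]
      · have := (hf.continuous.norm).tendsto x
        rwa [hf0, norm_zero] at this
    · have hev : f =ᶠ[𝓝 x] (fun y : EuclideanSpace ℝ (Fin n) => if y 0 ≤ 0 then (0:F) else f y) := by
        filter_upwards [hop_pos.mem_nhds hx] with y hy
        rw [if_neg (not_le.mpr hy)]
      exact hf.continuous.continuousAt.congr hev
  | succ m ih =>
    intro F _ _ f hf hv
    have h0 : ∀ x : EuclideanSpace ℝ (Fin n), x 0 = 0 → f x = 0 := by
      intro x hx
      have h00 := hv 0 (Nat.zero_le _) x hx
      have h01 : f x = (iteratedFDeriv ℝ 0 f x) (fun _ => 0) :=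
        (iteratedFDeriv_zero_apply _).symm
      rw [h01, h00]; simp
    have h1 : ∀ x : EuclideanSpace ℝ (Fin n), x 0 = 0 → fderiv ℝ f x = 0 := by
      intro x hx
      ext u
      have h10 := hv 1 (by omega) x hx
      have h11 : fderiv ℝ f x u = (iteratedFDeriv ℝ 1 f x) (fun _ => u) := by
        rw [iteratedFDeriv_one_apply]
      rw [h11, h10]; simp
    have hder : ∀ x : EuclideanSpace ℝ (Fin n),
        HasFDerivAt (fun y : EuclideanSpace ℝ (Fin n) => if y 0 ≤ 0 then (0:F) else f y)
          (if x 0 ≤ 0 then (0 : EuclideanSpace ℝ (Fin n) →L[ℝ] F) else fderiv ℝ f x) x := by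
      intro x
      rcases lt_trichotomy (x 0) 0 with hx | hx | hx
      · have hev : (fun _ => (0:F)) =ᶠ[𝓝 x]
            (fun y : EuclideanSpace ℝ (Fin n) => if y 0 ≤ 0 then (0:F) else f y) := by
          filter_upwards [hop_neg.mem_nhds hx] with y hy
          rw [if_pos (le_of_lt hy)]
        rw [if_pos (le_of_lt hx)]
        exact (hasFDerivAt_const (0:F) x).congr_of_eventuallyEq hev.symm
      · rw [if_pos (le_of_eq hx)]
        have hfx0 : f x = 0 := h0 x hx
        have hfd : HasFDerivAt f (0 : EuclideanSpace ℝ (Fin n) →L[ℝ] F) x := by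
          have hdx := (hf.differentiable (by simp) x).hasFDerivAt
          rwa [h1 x hx] at hdx
        have hlo := hfd.isLittleO
        apply HasFDerivAt.of_isLittleO
        refine (Asymptotics.isBigO_of_le _ ?_).trans_isLittleO hlo
        intro y
        show ‖(if y 0 ≤ 0 then (0:F) else f y) - (if x 0 ≤ 0 then (0:F) else f x)
          - (0 : EuclideanSpace ℝ (Fin n) →L[ℝ] F) (y - x)‖ ≤ _
        rw [if_pos (le_of_eq hx)]
        by_cases hy : y 0 ≤ 0
        · simp [hy, hfx0]
        · simp [hy, hfx0]
      · have hev : f =ᶠ[𝓝 x]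
            (fun y : EuclideanSpace ℝ (Fin n) => if y 0 ≤ 0 then (0:F) else f y) := by
          filter_upwards [hop_pos.mem_nhds hx] with y hy
          rw [if_neg (not_le.mpr hy)]
        rw [if_neg (not_le.mpr hx)]
        exact ((hf.differentiable (by simp) x).hasFDerivAt).congr_of_eventuallyEq hev.symm
    have hdiff : Differentiable ℝ
        (fun y : EuclideanSpace ℝ (Fin n) => if y 0 ≤ 0 then (0:F) else f y) :=
      fun x => (hder x).differentiableAt
    have hfd : fderiv ℝ (fun y : EuclideanSpace ℝ (Fin n) => if y 0 ≤ 0 then (0:F) else f y)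
        = fun x => if x 0 ≤ 0 then (0 : EuclideanSpace ℝ (Fin n) →L[ℝ] F) else fderiv ℝ f x :=
      funext fun x => (hder x).fderiv
    rw [show ((m+1 : ℕ) : WithTop ℕ∞) = (m : WithTop ℕ∞) + 1 by exact_mod_cast rfl]
    rw [contDiff_succ_iff_fderiv]
    refine ⟨hdiff, ?_, ?_⟩
    · intro hω
      exact absurd hω (by simp)
    · rw [hfd]
      apply ih (fderiv ℝ f) ((contDiff_infty_iff_fderiv.1 hf).2)
      intro k hk x hx
      ext v u
      have h5 := hv (k+1) (Nat.succ_le_succ hk) x hx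
      have h6 : iteratedFDeriv ℝ (k+1) f x (Fin.snoc v u) = 0 := by rw [h5]; simp
      rw [iteratedFDeriv_succ_apply_right, Fin.init_snoc, Fin.snoc_last] at h6
      simpa using h6

/-! ### locality, density, continuity -/

lemma De_zero (v : EuclideanSpace ℝ (Fin n)) :
    De v (fun _ : EuclideanSpace ℝ (Fin n) => (0:ℝ)) = fun _ => 0 := by
  funext x; simp [De, fderiv_const]

lemma lap_zero : _root_.lap (fun _ : EuclideanSpace ℝ (Fin n) => (0:ℝ)) = fun _ => 0 := by
  funext x
  rw [lap_eq]
  beta_reduce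
  rw [Finset.sum_eq_zero]
  intro i _
  rw [De_zero, De_zero]

lemma De_congr_on {f g : EuclideanSpace ℝ (Fin n) → ℝ} {U : Set (EuclideanSpace ℝ (Fin n))}
    (hU : IsOpen U) (h : ∀ y ∈ U, f y = g y) (v) :
    ∀ x ∈ U, De v f x = De v g x := by
  intro x hx
  have hev : f =ᶠ[𝓝 x] g := Filter.eventually_of_mem (hU.mem_nhds hx) h
  simp [De, hev.fderiv_eq]

lemma lap_congr_on {f g : EuclideanSpace ℝ (Fin n) → ℝ} {U : Set (EuclideanSpace ℝ (Fin n))}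
    (hU : IsOpen U) (h : ∀ y ∈ U, f y = g y) :
    ∀ x ∈ U, _root_.lap f x = _root_.lap g x := by
  intro x hx
  rw [lap_eq, lap_eq]
  beta_reduce
  apply Finset.sum_congr rfl
  intro i _
  exact De_congr_on hU (fun y hy => De_congr_on hU h _ y hy) _ x hx

lemma biharm_congr_on {f g : EuclideanSpace ℝ (Fin n) → ℝ} {U : Set (EuclideanSpace ℝ (Fin n))}
    (hU : IsOpen U) (h : ∀ y ∈ U, f y = g y) :
    ∀ x ∈ U, biharm f x = biharm g x := by
  intro x hx
  exact lap_congr_on hU (fun y hy => lap_congr_on hU h y hy) x hx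

lemma zero_on_boundary {B : EuclideanSpace ℝ (Fin n) → ℝ} (hB : Continuous B)
    (h : ∀ y : EuclideanSpace ℝ (Fin n), y 0 < 0 → B y = 0) :
    ∀ y : EuclideanSpace ℝ (Fin n), y 0 ≤ 0 → B y = 0 := by
  intro y hy
  rcases lt_or_eq_of_le hy with h' | h'
  · exact h y h'
  · have h1 : Filter.Tendsto (fun k : ℕ => (1/(k+1) : ℝ)) Filter.atTop (𝓝 0) :=
      tendsto_one_div_add_atTop_nhds_zero_nat
    have h2 : Filter.Tendsto (fun k : ℕ => (1/(k+1) : ℝ) • (ee : EuclideanSpace ℝ (Fin n)))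
        Filter.atTop (𝓝 ((0:ℝ) • (ee : EuclideanSpace ℝ (Fin n)))) := h1.smul_const ee
    have hseq : Filter.Tendsto (fun k : ℕ => y - (1/(k+1) : ℝ) • ee) Filter.atTop (𝓝 y) := by
      simpa using (tendsto_const_nhds (x := y) (f := Filter.atTop)).sub h2
    have hcoord : ∀ k : ℕ, (y - (1/(k+1):ℝ) • (ee : EuclideanSpace ℝ (Fin n))) 0 < 0 := by
      intro k
      rw [PiLp.sub_apply, PiLp.smul_apply, ee_zero, smul_eq_mul, ← h']
      have : (0:ℝ) < 1/(k+1) := by positivity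
      linarith
    have hlim : Filter.Tendsto (fun k : ℕ => B (y - (1/(k+1):ℝ) • ee)) Filter.atTop (𝓝 (B y)) :=
      (hB.continuousAt.tendsto).comp hseq
    rw [show (fun k : ℕ => B (y - (1/(k+1):ℝ) • ee)) = fun _ => (0:ℝ) from
      funext fun k => h _ (hcoord k)] at hlim
    exact (tendsto_nhds_unique hlim tendsto_const_nhds)

lemma cont_de' {f : EuclideanSpace ℝ (Fin n) → ℝ} {m k : ℕ} (hf : ContDiff ℝ (k:ℕ) f)
    (hmk : m + 1 ≤ k) (v) : ContDiff ℝ (m:ℕ) (De v f) := by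
  have h1 : ContDiff ℝ (m : ℕ) (fderiv ℝ f) := hf.fderiv_right (by exact_mod_cast hmk)
  exact (ContinuousLinearMap.apply ℝ ℝ v).contDiff.comp h1

lemma biharm_continuous {f : EuclideanSpace ℝ (Fin n) → ℝ} (hf : ContDiff ℝ (4:ℕ) f) :
    Continuous (biharm f) := by
  have hlap2 : ContDiff ℝ (2:ℕ) (_root_.lap f) := by
    rw [lap_eq]
    exact ContDiff.sum fun i _ =>
      cont_de' (m := 2) (cont_de' (m := 3) hf (by norm_num) _) (by norm_num) _
  show Continuous (_root_.lap (_root_.lap f))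
  rw [lap_eq (_root_.lap f)]
  apply continuous_finset_sum
  intro i _
  have : ContDiff ℝ (0:ℕ) (De (EuclideanSpace.single i 1)
      (De (EuclideanSpace.single i 1) (_root_.lap f))) :=
    cont_de' (m := 0) (cont_de' (m := 1) hlap2 (by norm_num) _) (by norm_num) _
  rw [show ((0:ℕ) : WithTop ℕ∞) = 0 from rfl, contDiff_zero] at this
  exact this

/-! ### the matching of derivatives on the hyperplane -/

lemma matching (ψ : EuclideanSpace ℝ (Fin n) → ℝ) (hψ : SM ψ)
    (hbc0 : ∀ x, x 0 = 0 → ψ x = 0)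
    (hbc1 : ∀ x, x 0 = 0 → De ee ψ x = 0)
    (hBS : ∀ x, x 0 = 0 → biharm ψ x = 0) :
    ∀ k ≤ 4, ∀ x : EuclideanSpace ℝ (Fin n), x 0 = 0 → iteratedFDeriv ℝ k
      (fun y => -ψ (Rc y) - 2 * y 0 * De ee ψ (Rc y)
        - (y 0)^2 * _root_.lap ψ (Rc y) - ψ y) x = 0 := by
  have smu : SM (De ee ψ) := hψ.de ee
  have smp2 : SM (De ee (De ee ψ)) := smu.de ee
  have smp3 : SM (De ee (De ee (De ee ψ))) := smp2.de ee
  have smp4 : SM (De ee (De ee (De ee (De ee ψ)))) := smp3.de ee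
  have smv : SM (_root_.lap ψ) := hψ.lap
  have smw1 : SM (De ee (_root_.lap ψ)) := smv.de ee
  have smw2 : SM (De ee (De ee (_root_.lap ψ))) := smw1.de ee
  have smw3 : SM (De ee (De ee (De ee (_root_.lap ψ)))) := smw2.de ee
  set hdf : EuclideanSpace ℝ (Fin n) → ℝ := fun y => -ψ (Rc y) - 2 * y 0 * De ee ψ (Rc y)
        - (y 0)^2 * _root_.lap ψ (Rc y) - ψ y with hdfdef
  have smhdf : SM hdf := by
    rw [hdfdef]
    apply ContDiff.sub _ hψ
    apply ContDiff.sub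
    · apply ContDiff.sub hψ.compRc.neg
      exact (contDiff_const.mul SM_coord).mul smu.compRc
    · exact (SM_coord.pow 2).mul smv.compRc
  have A0 : hdf = fun y => (-1) * ψ (Rc y) + (0:ℝ) * ψ (Rc y) + (-2) * (y 0) * De ee ψ (Rc y)
      + (0:ℝ) * (y 0) * De ee ψ (Rc y) + (-1) * (y 0) * (y 0) * _root_.lap ψ (Rc y)
      + (-1) * ψ y := by
    rw [hdfdef]; funext y; ring
  have A1 : De ee hdf = fun y => (-1) * De ee ψ (Rc y) + (0:ℝ) * ψ (Rc y)
      + 2 * (y 0) * De ee (De ee ψ) (Rc y) + (-2) * (y 0) * _root_.lap ψ (Rc y)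
      + 1 * (y 0) * (y 0) * De ee (_root_.lap ψ) (Rc y) + (-1) * De ee ψ y := by
    rw [A0, De_shape (-1) 0 (-2) 0 (-1) (-1) ψ ψ (De ee ψ) (De ee ψ) (_root_.lap ψ) ψ
      hψ hψ smu smu smv hψ]
    funext y; ring
  have A2 : De ee (De ee hdf) = fun y => 3 * De ee (De ee ψ) (Rc y)
      + (-2) * _root_.lap ψ (Rc y) + (-2) * (y 0) * De ee (De ee (De ee ψ)) (Rc y)
      + 4 * (y 0) * De ee (_root_.lap ψ) (Rc y)
      + (-1) * (y 0) * (y 0) * De ee (De ee (_root_.lap ψ)) (Rc y)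
      + (-1) * De ee (De ee ψ) y := by
    rw [A1, De_shape (-1) 0 2 (-2) 1 (-1) (De ee ψ) ψ (De ee (De ee ψ)) (_root_.lap ψ)
      (De ee (_root_.lap ψ)) (De ee ψ) smu hψ smp2 smv smw1 smu]
    funext y; ring
  have A3 : De ee (De ee (De ee hdf)) = fun y => (-5) * De ee (De ee (De ee ψ)) (Rc y)
      + 6 * De ee (_root_.lap ψ) (Rc y)
      + 2 * (y 0) * De ee (De ee (De ee (De ee ψ))) (Rc y)
      + (-6) * (y 0) * De ee (De ee (_root_.lap ψ)) (Rc y)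
      + 1 * (y 0) * (y 0) * De ee (De ee (De ee (_root_.lap ψ))) (Rc y)
      + (-1) * De ee (De ee (De ee ψ)) y := by
    rw [A2, De_shape 3 (-2) (-2) 4 (-1) (-1) (De ee (De ee ψ)) (_root_.lap ψ)
      (De ee (De ee (De ee ψ))) (De ee (_root_.lap ψ)) (De ee (De ee (_root_.lap ψ)))
      (De ee (De ee ψ)) smp2 smv smp3 smw1 smw2 smp2]
    funext y; ring
  have A4 : De ee (De ee (De ee (De ee hdf))) = fun y =>
      7 * De ee (De ee (De ee (De ee ψ))) (Rc y)
      + (-12) * De ee (De ee (_root_.lap ψ)) (Rc y)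
      + (-2) * (y 0) * De ee (De ee (De ee (De ee (De ee ψ)))) (Rc y)
      + 8 * (y 0) * De ee (De ee (De ee (_root_.lap ψ))) (Rc y)
      + (-1) * (y 0) * (y 0) * De ee (De ee (De ee (De ee (_root_.lap ψ)))) (Rc y)
      + (-1) * De ee (De ee (De ee (De ee ψ))) y := by
    rw [A3, De_shape (-5) 6 2 (-6) 1 (-1) (De ee (De ee (De ee ψ))) (De ee (_root_.lap ψ))
      (De ee (De ee (De ee (De ee ψ)))) (De ee (De ee (_root_.lap ψ)))
      (De ee (De ee (De ee (_root_.lap ψ)))) (De ee (De ee (De ee ψ)))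
      smp3 smw1 smp4 smw2 smw3 smp3]
    funext y; ring
  have E0 : ∀ x, x 0 = 0 → hdf x = 0 := by
    intro x hx
    rw [A0]
    beta_reduce
    rw [Rc_fix hx, hx, hbc0 x hx]
    ring
  have E1 : ∀ x, x 0 = 0 → De ee hdf x = 0 := by
    intro x hx
    rw [A1]
    beta_reduce
    rw [Rc_fix hx, hx, hbc1 x hx]
    ring
  have E2 : ∀ x, x 0 = 0 → De ee (De ee hdf) x = 0 := by
    intro x hx
    rw [A2]
    beta_reduce
    rw [Rc_fix hx, hx, lap_on_S hψ hbc0 x hx]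
    ring
  have E3 : ∀ x, x 0 = 0 → De ee (De ee (De ee hdf)) x = 0 := by
    intro x hx
    rw [A3]
    beta_reduce
    rw [Rc_fix hx, hx, de_lap_on_S hψ hbc1 x hx]
    ring
  have E4 : ∀ x, x 0 = 0 → De ee (De ee (De ee (De ee hdf))) x = 0 := by
    intro x hx
    rw [A4]
    beta_reduce
    rw [Rc_fix hx, hx, p4_eq_2w2 hψ hbc0 hbc1 hBS x hx]
    ring
  have hvan : ∀ k ≤ 4, ∀ x : EuclideanSpace ℝ (Fin n), x 0 = 0 → Dn k hdf x = 0 := by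
    intro k hk
    interval_cases k
    · exact E0
    · exact E1
    · exact E2
    · exact E3
    · exact E4
  intro k hk
  exact vanish_iterated k hdf smhdf (fun j hj => hvan j (le_trans hj hk))

/-! ### the reflected function is biharmonic on the upper half space -/

lemma biharm_phi (ψ : EuclideanSpace ℝ (Fin n) → ℝ) (hψ : SM ψ)
    (hbih : ∀ y : EuclideanSpace ℝ (Fin n), y 0 < 0 → biharm ψ y = 0) :
    ∀ y : EuclideanSpace ℝ (Fin n), 0 < y 0 →
      biharm (fun y => -ψ (Rc y) - 2 * y 0 * De ee ψ (Rc y)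
        - (y 0)^2 * _root_.lap ψ (Rc y)) y = 0 := by
  have smu : SM (De ee ψ) := hψ.de ee
  have smp2 : SM (De ee (De ee ψ)) := smu.de ee
  have smv : SM (_root_.lap ψ) := hψ.lap
  have smw1 : SM (De ee (_root_.lap ψ)) := smv.de ee
  have smq : SM (_root_.lap (_root_.lap ψ)) := smv.lap
  set φf : EuclideanSpace ℝ (Fin n) → ℝ := fun y => -ψ (Rc y) - 2 * y 0 * De ee ψ (Rc y)
      - (y 0)^2 * _root_.lap ψ (Rc y) with hφfdef
  have P0 : φf = fun y => (-1) * ψ (Rc y) + (0:ℝ) * ψ (Rc y) + (-2) * (y 0) * De ee ψ (Rc y)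
      + (0:ℝ) * (y 0) * De ee ψ (Rc y) + (-1) * (y 0) * (y 0) * _root_.lap ψ (Rc y)
      + (0:ℝ) * ψ y := by
    rw [hφfdef]; funext y; ring
  have P1 : _root_.lap φf = fun y => (-3) * _root_.lap ψ (Rc y)
      + 4 * De ee (De ee ψ) (Rc y) + 2 * (y 0) * De ee (_root_.lap ψ) (Rc y)
      + (0:ℝ) * (y 0) * ψ (Rc y)
      + (-1) * (y 0) * (y 0) * _root_.lap (_root_.lap ψ) (Rc y) + (0:ℝ) * ψ y := by
    rw [P0, lap_shape (-1) 0 (-2) 0 (-1) 0 ψ ψ (De ee ψ) (De ee ψ) (_root_.lap ψ) ψ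
      hψ hψ smu smu smv hψ]
    rw [lap_de hψ]
    funext y; ring
  have P2 : _root_.lap (_root_.lap φf) = fun y =>
      (-5) * _root_.lap (_root_.lap ψ) (Rc y)
      + 6 * (y 0) * De ee (_root_.lap (_root_.lap ψ)) (Rc y)
      + (-1) * (y 0) * (y 0) * _root_.lap (_root_.lap (_root_.lap ψ)) (Rc y) := by
    rw [P1, lap_shape (-3) 4 2 0 (-1) 0 (_root_.lap ψ) (De ee (De ee ψ))
      (De ee (_root_.lap ψ)) ψ (_root_.lap (_root_.lap ψ)) ψ smv smp2 smw1 hψ smq hψ]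
    rw [lap_de smu, lap_de hψ, lap_de smv]
    funext y; ring
  intro y hy
  show _root_.lap (_root_.lap φf) y = 0
  rw [P2]
  beta_reduce
  have hry : (Rc y) 0 < 0 := by rw [Rc_coord]; linarith
  have hq : _root_.lap (_root_.lap ψ) (Rc y) = 0 := hbih (Rc y) hry
  have hq1 : De ee (_root_.lap (_root_.lap ψ)) (Rc y) = 0 := by
    have h2 := De_congr_on hop_neg
      (fun z (hz : z ∈ {w : EuclideanSpace ℝ (Fin n) | w 0 < 0}) => hbih z hz) ee (Rc y) hry
    rw [De_zero] at h2
    simpa [biharm] using h2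
  have hlapq : _root_.lap (_root_.lap (_root_.lap ψ)) (Rc y) = 0 := by
    have h2 := lap_congr_on hop_neg
      (fun z (hz : z ∈ {w : EuclideanSpace ℝ (Fin n) | w 0 < 0}) => hbih z hz) (Rc y) hry
    rw [lap_zero] at h2
    simpa [biharm] using h2
  rw [hq, hq1, hlapq]
  ring
end Duffin

open Duffin in
/-- Duffin's reflection principle for biharmonic functions on the half space. -/
theorem duffin_reflection (n : ℕ) [NeZero n]
    (ψ : EuclideanSpace ℝ (Fin n) → ℝ) (hψ : ContDiff ℝ (⊤ : ℕ∞) ψ)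
    (hbih : ∀ y : EuclideanSpace ℝ (Fin n), y 0 < 0 → biharm ψ y = 0)
    (hbc : ∀ y : EuclideanSpace ℝ (Fin n), y 0 = 0 →
      ψ y = 0 ∧ fderiv ℝ ψ y (EuclideanSpace.single 0 1) = 0) :
    ContDiff ℝ 4 (fun y : EuclideanSpace ℝ (Fin n) =>
        if y 0 ≤ 0 then ψ y
        else -ψ (reflect y) - 2 * y 0 * fderiv ℝ ψ (reflect y) (EuclideanSpace.single 0 1)
          - (y 0) ^ 2 * lap ψ (reflect y)) ∧
      ∀ y : EuclideanSpace ℝ (Fin n),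
        biharm (fun y : EuclideanSpace ℝ (Fin n) =>
          if y 0 ≤ 0 then ψ y
          else -ψ (reflect y) - 2 * y 0 * fderiv ℝ ψ (reflect y) (EuclideanSpace.single 0 1)
            - (y 0) ^ 2 * lap ψ (reflect y)) y = 0 := by
  have hbc0 : ∀ x : EuclideanSpace ℝ (Fin n), x 0 = 0 → ψ x = 0 := fun x hx => (hbc x hx).1
  have hbc1 : ∀ x : EuclideanSpace ℝ (Fin n), x 0 = 0 → De ee ψ x = 0 := fun x hx => (hbc x hx).2
  have hBC : Continuous (biharm ψ) := (SM.lap (SM.lap hψ)).continuous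
  have hBS : ∀ x, x 0 = 0 → biharm ψ x = 0 := fun x hx =>
    zero_on_boundary hBC hbih x (le_of_eq hx)
  have hiter := matching ψ hψ hbc0 hbc1 hBS
  have smhdf : SM (fun y : EuclideanSpace ℝ (Fin n) =>
      -ψ (Rc y) - 2 * y 0 * De ee ψ (Rc y) - (y 0)^2 * _root_.lap ψ (Rc y) - ψ y) := by
    apply ContDiff.sub _ hψ
    apply ContDiff.sub
    · exact ContDiff.sub (SM.compRc hψ).neg
        ((contDiff_const.mul SM_coord).mul (SM.compRc (SM.de hψ ee)))
    · exact (SM_coord.pow 2).mul (SM.compRc (SM.lap hψ))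
  have hgl := glue (n := n) 4 (fun y : EuclideanSpace ℝ (Fin n) =>
      -ψ (Rc y) - 2 * y 0 * De ee ψ (Rc y) - (y 0)^2 * _root_.lap ψ (Rc y) - ψ y)
    smhdf hiter
  have hFeq : (fun y : EuclideanSpace ℝ (Fin n) => if y 0 ≤ 0 then ψ y
        else -ψ (reflect y) - 2 * y 0 * fderiv ℝ ψ (reflect y) (EuclideanSpace.single 0 1)
          - (y 0) ^ 2 * lap ψ (reflect y))
      = fun y : EuclideanSpace ℝ (Fin n) => ψ y + (if y 0 ≤ 0 then (0:ℝ) else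
          -ψ (Rc y) - 2 * y 0 * De ee ψ (Rc y) - (y 0)^2 * _root_.lap ψ (Rc y) - ψ y) := by
    funext y
    by_cases hy : y 0 ≤ 0
    · simp [hy]
    · rw [if_neg hy, if_neg hy]
      show -ψ (Rc y) - 2 * y 0 * De ee ψ (Rc y) - (y 0)^2 * _root_.lap ψ (Rc y) = _
      ring
  have hC4 : ContDiff ℝ ((4:ℕ) : WithTop ℕ∞)
      (fun y : EuclideanSpace ℝ (Fin n) => ψ y + (if y 0 ≤ 0 then (0:ℝ) else
        -ψ (Rc y) - 2 * y 0 * De ee ψ (Rc y) - (y 0)^2 * _root_.lap ψ (Rc y) - ψ y)) :=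
    ContDiff.add (hψ.of_le (WithTop.coe_le_coe.mpr le_top)) hgl
  have hC4' : ContDiff ℝ ((4:ℕ) : WithTop ℕ∞)
      (fun y : EuclideanSpace ℝ (Fin n) => if y 0 ≤ 0 then ψ y
        else -ψ (reflect y) - 2 * y 0 * fderiv ℝ ψ (reflect y) (EuclideanSpace.single 0 1)
          - (y 0) ^ 2 * lap ψ (reflect y)) := by
    rw [hFeq]; exact hC4
  have hneg : ∀ z : EuclideanSpace ℝ (Fin n), z 0 < 0 →
      biharm (fun y : EuclideanSpace ℝ (Fin n) => if y 0 ≤ 0 then ψ y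
        else -ψ (reflect y) - 2 * y 0 * fderiv ℝ ψ (reflect y) (EuclideanSpace.single 0 1)
          - (y 0) ^ 2 * lap ψ (reflect y)) z = 0 := by
    intro z hz
    rw [biharm_congr_on hop_neg (g := ψ)
      (fun w (hw : w ∈ {v : EuclideanSpace ℝ (Fin n) | v 0 < 0}) =>
        if_pos (le_of_lt hw)) z hz]
    exact hbih z hz
  have hpos : ∀ z : EuclideanSpace ℝ (Fin n), 0 < z 0 →
      biharm (fun y : EuclideanSpace ℝ (Fin n) => if y 0 ≤ 0 then ψ y
        else -ψ (reflect y) - 2 * y 0 * fderiv ℝ ψ (reflect y) (EuclideanSpace.single 0 1)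
          - (y 0) ^ 2 * lap ψ (reflect y)) z = 0 := by
    intro z hz
    rw [biharm_congr_on hop_pos
      (f := fun y : EuclideanSpace ℝ (Fin n) => if y 0 ≤ 0 then ψ y
        else -ψ (reflect y) - 2 * y 0 * fderiv ℝ ψ (reflect y) (EuclideanSpace.single 0 1)
          - (y 0) ^ 2 * lap ψ (reflect y))
      (g := fun y : EuclideanSpace ℝ (Fin n) =>
        -ψ (Rc y) - 2 * y 0 * De ee ψ (Rc y) - (y 0)^2 * _root_.lap ψ (Rc y))
      (fun w (hw : w ∈ {v : EuclideanSpace ℝ (Fin n) | 0 < v 0}) =>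
        if_neg (not_le.mpr hw)) z hz]
    exact biharm_phi ψ hψ hbih z hz
  constructor
  · rw [hFeq]; exact_mod_cast hC4
  · intro y
    rcases lt_trichotomy (y 0) 0 with hy | hy | hy
    · exact hneg y hy
    · exact zero_on_boundary (biharm_continuous hC4') hneg y (le_of_eq hy)
    · exact hpos y hy
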